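/- Fix an open set A ⊂ ℝⁿ and a Lipschitz function φ : A → ℝ of class C¹ with |∇φ(x)| > 0 for all x ∈ A, and set A_r = φ⁻¹((−∞,r)). Then for every f ∈ BV(A), for Lebesgue-a.e. r ∈ ℝ and ℋ^{n−1}-a.e. x ∈ ∂A_r ∩ A, one has f(x) = Tr⁺(f, ∂A_r)(x) = Tr⁻(f, ∂A_r)(x). -/

import Mathlib

open MeasureTheory Metric Set Filter
open scoped Topology ENNReal NNReal RealInnerProductSpace

noncomputable section

abbrev Eucl (n : ℕ) : Type := EuclideanSpace ℝ (Fin n)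

/-- Divergence of a vector field on `Eucl n`. -/
def diverg {n : ℕ} (Φ : Eucl n → Eucl n) (x : Eucl n) : ℝ :=
  ∑ i, fderiv ℝ Φ x (EuclideanSpace.single i 1) i

/-- Total variation `|Df|(U)` of `f` on the set `U`, defined by duality with
compactly supported `C¹` vector fields bounded by one. -/
def totalVariation {n : ℕ} (f : Eucl n → ℝ) (U : Set (Eucl n)) : ℝ≥0∞ :=
  ⨆ Φ : {Φ : Eucl n → Eucl n // ContDiff ℝ 1 Φ ∧ HasCompactSupport Φ ∧
      tsupport Φ ⊆ U ∧ ∀ x, ‖Φ x‖ ≤ 1},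
    ENNReal.ofReal (∫ x in U, f x * diverg Φ.1 x)

/-- `f ∈ BV(U)`: `f` is integrable on `U` with finite total variation in `U`. -/
def MemBV {n : ℕ} (f : Eucl n → ℝ) (U : Set (Eucl n)) : Prop :=
  IntegrableOn f U volume ∧ totalVariation f U < ⊤

/-- `f ∈ BV_loc(Ω)`: `f ∈ BV(Ω ∩ A)` for every bounded open set `A ⊆ ℝⁿ`. -/
def MemBVloc {n : ℕ} (f : Eucl n → ℝ) (Ω : Set (Eucl n)) : Prop :=
  ∀ A : Set (Eucl n), IsOpen A → Bornology.IsBounded A → MemBV f (Ω ∩ A)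

/-- Perimeter `P(E;U) = |D1_E|(U)` of a set `E` in `U`. -/
def perim {n : ℕ} (E U : Set (Eucl n)) : ℝ≥0∞ :=
  totalVariation (Set.indicator E fun _ => (1 : ℝ)) U

/-- `K ⊂⊂ A` : `K` is compactly contained in `A`. -/
def CptIn {n : ℕ} (K A : Set (Eucl n)) : Prop :=
  IsCompact (closure K) ∧ closure K ⊆ A

/-- The minimality gap `Ψ_Ω(f;A)` of a function `f` in `A`, relative to `Ω`. -/
def minGap {n : ℕ} (Ω A : Set (Eucl n)) (f : Eucl n → ℝ) : ℝ≥0∞ :=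
  totalVariation f (Ω ∩ A) -
    ⨅ g : {g : Eucl n → ℝ // MemBVloc g Ω ∧ CptIn (tsupport (g - f)) A},
      totalVariation g.1 (Ω ∩ A)

/-- The minimality gap `Ψ_Ω(E;A)` of a set `E` in `A`, relative to `Ω`. -/
def minGapSet {n : ℕ} (Ω A E : Set (Eucl n)) : ℝ≥0∞ :=
  minGap Ω A (Set.indicator E fun _ => (1 : ℝ))

/-- `T` is a trace of `f` on `Γ` computed from the domain `D`, with respect to the
`d`-dimensional Hausdorff measure: for `ℋ^d`-a.e. `x ∈ Γ`, the averages of `|T x − f|`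
over `B_r(x) ∩ D` tend to `0` as `r → 0⁺`. -/
def IsTraceOn {n : ℕ} (d : ℝ) (D : Set (Eucl n)) (f T : Eucl n → ℝ) (Γ : Set (Eucl n)) : Prop :=
  ∀ᵐ x ∂((μH[d] : Measure (Eucl n)).restrict Γ),
    Tendsto (fun r : ℝ =>
        (volume (ball x r ∩ D)).toReal⁻¹ * ∫ y in ball x r ∩ D, |T x - f y|)
      (𝓝[>] (0:ℝ)) (𝓝 0)

/-!
At a Lebesgue point `x ∈ A` of `f`, the averages of `|T - f|` over `B_ρ(x) ∩ D` control
`|T - f x|` as soon as `D` fills a fixed proportion of `B_ρ(x)` for small `ρ`; so any trace of `f`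
from such a `D` equals `f x`. If `φ x = r` and `Dφ(x) ≠ 0`, both `{φ < r}` and `{φ > r}` contain a
ball of radius comparable to `ρ` inside `B_ρ(x)`, and `∂A_r ∩ A ⊆ {φ = r}`. It remains to see that
the Lebesgue-null set `S` of non-Lebesgue points is `ℋ^{n-1}`-null on almost every level set
`{φ = r}`: this is the null-set case of Eilenberg's inequality, obtained by covering `S` with balls
of small total volume (Besicovitch) and applying Fatou's lemma to
`r ↦ ∑ (2ρ)^{n-1} 1[|r - φ x| ≤ Lρ]` over the balls.
-/

open Module

section SetAverage

variable {α : Type*} [MeasurableSpace α] {μ : Measure α} {s t : Set α}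

theorem abs_sub_le_setAverage_add {f : α → ℝ} (hs₀ : μ s ≠ 0) (hs : μ s ≠ ∞)
    (hf : IntegrableOn f s μ) (a b : ℝ) :
    |a - b| ≤ (⨍ y in s, |a - f y| ∂μ) + ⨍ y in s, |f y - b| ∂μ := by
  have ha : IntegrableOn (fun y => |a - f y|) s μ := ((integrableOn_const hs).sub hf).abs
  have hb : IntegrableOn (fun y => |f y - b|) s μ := (hf.sub (integrableOn_const hs)).abs
  calc |a - b| = (μ.real s)⁻¹ * ∫ _ in s, |a - b| ∂μ := by
        rw [← smul_eq_mul, ← setAverage_eq, setAverage_const hs₀ hs]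
    _ ≤ (μ.real s)⁻¹ * ∫ y in s, (|a - f y| + |f y - b|) ∂μ := by
        refine mul_le_mul_of_nonneg_left ?_ (by positivity)
        exact setIntegral_mono (integrableOn_const hs) (ha.add hb) fun y => abs_sub_le a (f y) b
    _ = _ := by
        rw [integral_add ha hb, mul_add, setAverage_eq, setAverage_eq, smul_eq_mul, smul_eq_mul]

theorem setAverage_le_inv_mul_setAverage {g : α → ℝ} (hst : s ⊆ t) (ht : 0 < μ.real t)
    {κ : ℝ} (hκ : 0 < κ) (hμ : κ * μ.real t ≤ μ.real s) (hg : IntegrableOn g t μ)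
    (hg₀ : ∀ y, 0 ≤ g y) :
    ⨍ y in s, g y ∂μ ≤ κ⁻¹ * ⨍ y in t, g y ∂μ := by
  have hs : 0 < μ.real s := (mul_pos hκ ht).trans_le hμ
  have hratio : (μ.real s)⁻¹ * μ.real t ≤ κ⁻¹ := by
    rw [inv_mul_le_iff₀ hs, le_mul_inv_iff₀ hκ, mul_comm]
    exact hμ
  have havg : 0 ≤ ⨍ y in t, g y ∂μ := by
    rw [setAverage_eq]
    exact smul_nonneg (inv_nonneg.2 ht.le) (integral_nonneg hg₀)
  calc ⨍ y in s, g y ∂μ = (μ.real s)⁻¹ * ∫ y in s, g y ∂μ := by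
        rw [setAverage_eq, smul_eq_mul]
    _ ≤ (μ.real s)⁻¹ * ∫ y in t, g y ∂μ := by
        refine mul_le_mul_of_nonneg_left ?_ (by positivity)
        exact setIntegral_mono_set hg (Eventually.of_forall hg₀) hst.eventuallyLE
    _ = ((μ.real s)⁻¹ * μ.real t) * ⨍ y in t, g y ∂μ := by
        rw [setAverage_eq, smul_eq_mul, mul_assoc, mul_inv_cancel_left₀ ht.ne']
    _ ≤ κ⁻¹ * ⨍ y in t, g y ∂μ := by gcongr

end SetAverage

theorem ae_tendsto_setAverage_abs_sub_of_integrableOn {α : Type*} [MetricSpace α]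
    [MeasurableSpace α] [SecondCountableTopology α] [BorelSpace α] {μ : Measure α}
    [IsLocallyFiniteMeasure μ] [IsUnifLocDoublingMeasure μ] {A : Set α} (hA : IsOpen A)
    {f : α → ℝ} (hf : IntegrableOn f A μ) :
    ∀ᵐ x ∂μ, x ∈ A →
      Tendsto (fun ρ => ⨍ y in closedBall x ρ, |f y - f x| ∂μ) (𝓝[>] 0) (𝓝 0) := by
  have hfA : LocallyIntegrable (A.indicator f) μ :=
    ((integrable_indicator_iff hA.measurableSet).2 hf).locallyIntegrable
  filter_upwards [IsUnifLocDoublingMeasure.ae_tendsto_average_norm_sub μ hfA 1] with x hx hxA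
  have hlim := hx (fun _ => x) id tendsto_id <| eventually_mem_nhdsWithin.mono
    fun ρ (hρ : 0 < ρ) => mem_closedBall_self (by simpa using hρ.le)
  obtain ⟨ε, hε, hεA⟩ := Metric.isOpen_iff.1 hA x hxA
  refine hlim.congr' ?_
  filter_upwards [Ioo_mem_nhdsGT hε] with ρ hρ
  refine setAverage_congr_fun measurableSet_closedBall (Eventually.of_forall fun y hy => ?_)
  rw [indicator_of_mem (hεA (closedBall_subset_ball hρ.2 hy)), indicator_of_mem hxA,
    Real.norm_eq_abs]

def HasPositiveLowerDensityAt {α : Type*} [PseudoMetricSpace α] [MeasurableSpace α]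
    (μ : Measure α) (s : Set α) (x : α) : Prop :=
  ∃ κ : ℝ≥0, 0 < κ ∧ ∀ᶠ ρ in 𝓝[>] (0 : ℝ), κ * μ (ball x ρ) ≤ μ (ball x ρ ∩ s)

namespace HasPositiveLowerDensityAt

variable {α : Type*} [PseudoMetricSpace α] [MeasurableSpace α] {μ : Measure α} {s t : Set α}
  {x : α}

theorem mono (h : HasPositiveLowerDensityAt μ s x) (hst : s ⊆ t) :
    HasPositiveLowerDensityAt μ t x := by
  obtain ⟨κ, hκ, hdens⟩ := h
  exact ⟨κ, hκ, hdens.mono fun ρ hρ => hρ.trans (measure_mono (inter_subset_inter_right _ hst))⟩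

theorem inter_of_mem_nhds (h : HasPositiveLowerDensityAt μ s x) (ht : t ∈ 𝓝 x) :
    HasPositiveLowerDensityAt μ (t ∩ s) x := by
  obtain ⟨κ, hκ, hdens⟩ := h
  obtain ⟨ε, hε, hεt⟩ := Metric.mem_nhds_iff.1 ht
  refine ⟨κ, hκ, ?_⟩
  filter_upwards [hdens, Ioo_mem_nhdsGT hε] with ρ hρ hρε
  rwa [← inter_assoc, inter_eq_left.2 ((ball_subset_ball hρε.2.le).trans hεt)]

end HasPositiveLowerDensityAt

theorem HasFDerivAt.eventually_exists_ball_subset_preimage_Iio {E : Type*}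
    [NormedAddCommGroup E] [NormedSpace ℝ E] {φ : E → ℝ} {ℓ : E →L[ℝ] ℝ} {x : E}
    (hφ : HasFDerivAt φ ℓ x) (hℓ : ℓ ≠ 0) :
    ∃ c > 0, ∀ᶠ ρ in 𝓝[>] (0 : ℝ), ∃ y, ball y (c * ρ) ⊆ ball x ρ ∩ φ ⁻¹' Iio (φ x) := by
  obtain ⟨v, hv⟩ : ∃ v, ℓ v ≠ 0 := by
    by_contra! h
    exact hℓ (ContinuousLinearMap.ext h)
  obtain ⟨w, hw⟩ : ∃ w, ℓ w = 1 := ⟨(ℓ v)⁻¹ • v, by simp [hv]⟩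
  have hw₀ : w ≠ 0 := by rintro rfl; simp at hw
  set a := ‖w‖⁻¹
  have ha : 0 < a := inv_pos.2 (norm_pos_iff.2 hw₀)
  set u := a • w with hu_def
  have hu : ‖u‖ = 1 := norm_smul_inv_norm hw₀
  have hℓu : ℓ u = a := by simp [hu_def, hw]
  set c := min 4⁻¹ (a / (4 * (‖ℓ‖ + 1)))
  have hc : 0 < c := lt_min (by norm_num) (by positivity)
  have hcℓ : ‖ℓ‖ * c ≤ a / 4 := by
    calc ‖ℓ‖ * c ≤ (‖ℓ‖ + 1) * (a / (4 * (‖ℓ‖ + 1))) :=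
          mul_le_mul (by linarith) (min_le_right _ _) hc.le (by positivity)
      _ = a / 4 := by field_simp
  obtain ⟨ε, hε, hεx⟩ : ∃ ε > 0, ∀ y ∈ ball x ε, ‖φ y - φ x - ℓ (y - x)‖ ≤ a / 8 * ‖y - x‖ :=
    Metric.eventually_nhds_iff_ball.1 ((hasFDerivAt_iff_isLittleO.1 hφ).def (by positivity))
  refine ⟨c, hc, ?_⟩
  filter_upwards [Ioo_mem_nhdsGT hε] with ρ ⟨hρ, hρε⟩
  refine ⟨x - (ρ / 2) • u, fun y hy => ?_⟩
  set z := y - (x - (ρ / 2) • u) with hz_def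
  have hz : ‖z‖ < c * ρ := mem_ball_iff_norm.1 hy
  have hyx : y - x = z - (ρ / 2) • u := by rw [hz_def]; abel
  have hyx_norm : ‖y - x‖ < ρ := by
    have : c * ρ ≤ 4⁻¹ * ρ := mul_le_mul_of_nonneg_right (min_le_left _ _) hρ.le
    calc ‖y - x‖ ≤ ‖z‖ + ‖(ρ / 2) • u‖ := hyx ▸ norm_sub_le _ _
      _ = ‖z‖ + ρ / 2 := by rw [norm_smul, hu, mul_one, Real.norm_of_nonneg (by positivity)]
      _ < ρ := by linarith
  have hℓyx : ℓ (y - x) ≤ -(a * ρ / 4) := by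
    have : ℓ z ≤ a / 4 * ρ :=
      calc ℓ z ≤ ‖ℓ‖ * ‖z‖ := (le_abs_self _).trans (ℓ.le_opNorm z)
        _ ≤ ‖ℓ‖ * (c * ρ) := by gcongr
        _ ≤ a / 4 * ρ := by rw [← mul_assoc]; gcongr
    rw [hyx, map_sub, map_smul, hℓu, smul_eq_mul]
    linarith
  have hrem : φ y - φ x - ℓ (y - x) ≤ a / 8 * ρ :=
    calc φ y - φ x - ℓ (y - x) ≤ a / 8 * ‖y - x‖ :=
          (le_abs_self _).trans (hεx y (ball_subset_ball hρε.le (mem_ball_iff_norm.2 hyx_norm)))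
      _ ≤ a / 8 * ρ := by gcongr
  refine ⟨mem_ball_iff_norm.2 hyx_norm, ?_⟩
  show φ y < φ x
  linarith [mul_pos ha hρ]

theorem exists_closedBall_covering_tsum_measure_le_of_null {α : Type*} [MetricSpace α]
    [SecondCountableTopology α] [MeasurableSpace α] [OpensMeasurableSpace α]
    [HasBesicovitchCovering α] (μ : Measure α) [SFinite μ] [μ.OuterRegular] {S : Set α}
    (hS : μ S = 0) {ε : ℝ≥0∞} (hε : ε ≠ 0) {δ : ℝ} (hδ : 0 < δ) :
    ∃ (t : Set α) (ρ : α → ℝ), t.Countable ∧ t ⊆ S ∧ (∀ x ∈ t, ρ x ∈ Ioo 0 δ) ∧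
      (S ⊆ ⋃ x ∈ t, closedBall x (ρ x)) ∧ ∑' x : t, μ (closedBall (x : α) (ρ x)) ≤ ε := by
  simpa [hS] using Besicovitch.exists_closedBall_covering_tsum_measure_le μ hε (fun _ => Ioo 0 δ) S
    fun _ _ δ' hδ' => by
      rw [Ioo_inter_Ioo, nonempty_Ioo, max_self]
      exact lt_min hδ hδ'

/-- An `L`-Lipschitz `φ` can only take the value `r` on `closedBall x (ρ x)` if
`|r - φ x| ≤ L ρ x`; this is the `d`-dimensional cost, at level `r`, of the balls centred in `t`. -/
def levelSetCoverSum {X : Type*} (φ : X → ℝ) (L : ℝ≥0) (d : ℝ) (t : Set X) (ρ : X → ℝ)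
    (r : ℝ) : ℝ≥0∞ :=
  ∑' x : t, (Icc (φ x - L * ρ x) (φ x + L * ρ x)).indicator
    (fun _ => ENNReal.ofReal (2 * ρ x) ^ d) r

theorem hausdorffMeasure_inter_preimage_singleton_le_liminf {X : Type*} [MetricSpace X]
    [MeasurableSpace X] [BorelSpace X] {S : Set X} {φ : X → ℝ} {L : ℝ≥0}
    (hφ : LipschitzOnWith L φ S) {d : ℝ} (hd : 0 ≤ d) {δ : ℕ → ℝ}
    (hδ : Tendsto δ atTop (𝓝 0)) (t : ℕ → Set X) (ρ : ℕ → X → ℝ)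
    (htc : ∀ k, (t k).Countable) (htS : ∀ k, t k ⊆ S) (hρ : ∀ k, ∀ x ∈ t k, ρ k x ∈ Icc 0 (δ k))
    (hcov : ∀ k, S ⊆ ⋃ x ∈ t k, closedBall x (ρ k x)) (r : ℝ) :
    μH[d] (S ∩ φ ⁻¹' {r}) ≤
      liminf (fun k => levelSetCoverSum φ L d (t k) (ρ k) r) atTop := by
  have : ∀ k, Countable (t k) := fun k => (htc k).to_subtype
  let ι k : Set (t k) := {x | r ∈ Icc (φ x - L * ρ k x) (φ x + L * ρ k x)}
  have hdiam : ∀ k, ∀ x ∈ t k, ediam (closedBall x (ρ k x)) ≤ ENNReal.ofReal (2 * ρ k x) :=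
    fun k x hx => by
      rw [← Metric.closedEBall_ofReal (hρ k x hx).1, ENNReal.ofReal_mul zero_le_two,
        ENNReal.ofReal_ofNat]
      exact ediam_closedEBall_le
  refine (Measure.hausdorffMeasure_le_liminf_tsum d _ (l := atTop)
    (fun k => ENNReal.ofReal (2 * δ k)) ?_ (fun k (i : ι k) => closedBall (i : X) (ρ k i))
    ?_ ?_).trans ?_
  · simpa using ENNReal.tendsto_ofReal (hδ.const_mul 2)
  · exact Eventually.of_forall fun k i => (hdiam k i i.1.2).trans
      (ENNReal.ofReal_le_ofReal (by linarith [(hρ k i i.1.2).2]))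
  · refine Eventually.of_forall fun k y ⟨hyS, hyr⟩ => ?_
    obtain ⟨x, hx, hyx⟩ := mem_iUnion₂.1 (hcov k hyS)
    have hφyx : |φ y - φ x| ≤ L * ρ k x :=
      (hφ.dist_le_mul y hyS x (htS k hx)).trans (by gcongr; exact hyx)
    rw [mem_preimage, mem_singleton_iff] at hyr
    subst hyr
    refine mem_iUnion.2 ⟨⟨⟨x, hx⟩, ?_⟩, hyx⟩
    constructor <;> linarith [abs_le.1 hφyx]
  · refine liminf_le_liminf (Eventually.of_forall fun k => ?_)
    calc ∑' i : ι k, ediam (closedBall (i : X) (ρ k i)) ^ d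
        ≤ ∑' i : ι k, ENNReal.ofReal (2 * ρ k i) ^ d :=
          ENNReal.tsum_le_tsum fun i => ENNReal.rpow_le_rpow (hdiam k i i.1.2) hd
      _ = levelSetCoverSum φ L d (t k) (ρ k) r :=
          tsum_subtype (ι k) fun x : t k => ENNReal.ofReal (2 * ρ k x) ^ d

theorem inter_preimage_Ioi_subset_diff_closure {X : Type*} [TopologicalSpace X] {A : Set X}
    (hA : IsOpen A) {φ : X → ℝ} (hφ : ContinuousOn φ A) (r : ℝ) :
    A ∩ φ ⁻¹' Ioi r ⊆ A \ closure (A ∩ φ ⁻¹' Iio r) := by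
  have hdisj : Disjoint (A ∩ φ ⁻¹' Ioi r) (A ∩ φ ⁻¹' Iio r) :=
    Set.disjoint_left.2 fun y hy hy' => (lt_asymm (show r < φ y from hy.2) hy'.2).elim
  exact fun y hy => ⟨hy.1, Set.disjoint_left.1
    (hdisj.closure_right (hφ.isOpen_inter_preimage hA isOpen_Ioi)) hy⟩

theorem frontier_inter_preimage_Iio_inter_subset {X : Type*} [TopologicalSpace X] {A : Set X}
    (hA : IsOpen A) {φ : X → ℝ} (hφ : ContinuousOn φ A) (r : ℝ) :
    frontier (A ∩ φ ⁻¹' Iio r) ∩ A ⊆ φ ⁻¹' {r} := by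
  rintro y ⟨hy, hyA⟩
  rw [(hφ.isOpen_inter_preimage hA isOpen_Iio).frontier_eq] at hy
  rw [mem_preimage, mem_singleton_iff]
  refine le_antisymm (not_lt.1 fun hgt => ?_) (not_lt.1 fun hlt => hy.2 ⟨hyA, hlt⟩)
  exact (inter_preimage_Ioi_subset_diff_closure hA hφ r ⟨hyA, hgt⟩).2 hy.1

section HaarMeasure

variable {E : Type*} [NormedAddCommGroup E] [NormedSpace ℝ E] [FiniteDimensional ℝ E]
  [MeasurableSpace E] [BorelSpace E] (μ : Measure E) [μ.IsAddHaarMeasure]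

theorem hasPositiveLowerDensityAt_of_ball_subset {s : Set E} {x : E} {c : ℝ} (hc : 0 < c)
    (h : ∀ᶠ ρ in 𝓝[>] (0 : ℝ), ∃ y, ball y (c * ρ) ⊆ ball x ρ ∩ s) :
    HasPositiveLowerDensityAt μ s x := by
  refine ⟨(c ^ finrank ℝ E).toNNReal, Real.toNNReal_pos.2 (by positivity), ?_⟩
  filter_upwards [h] with ρ ⟨y, hy⟩
  calc ((c ^ finrank ℝ E).toNNReal : ℝ≥0∞) * μ (ball x ρ) = μ (ball y (c * ρ)) := by
        rw [Measure.addHaar_ball_mul_of_pos μ y hc, Measure.addHaar_ball_center μ x]; rfl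
    _ ≤ μ (ball x ρ ∩ s) := measure_mono hy

theorem HasFDerivAt.hasPositiveLowerDensityAt_preimage_Iio {φ : E → ℝ} {ℓ : E →L[ℝ] ℝ} {x : E}
    (hφ : HasFDerivAt φ ℓ x) (hℓ : ℓ ≠ 0) :
    HasPositiveLowerDensityAt μ (φ ⁻¹' Iio (φ x)) x :=
  let ⟨_, hc, h⟩ := hφ.eventually_exists_ball_subset_preimage_Iio hℓ
  hasPositiveLowerDensityAt_of_ball_subset μ hc h

theorem HasFDerivAt.hasPositiveLowerDensityAt_preimage_Ioi {φ : E → ℝ} {ℓ : E →L[ℝ] ℝ} {x : E}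
    (hφ : HasFDerivAt φ ℓ x) (hℓ : ℓ ≠ 0) :
    HasPositiveLowerDensityAt μ (φ ⁻¹' Ioi (φ x)) x := by
  simpa [Set.preimage, neg_lt_neg_iff] using
    hφ.neg.hasPositiveLowerDensityAt_preimage_Iio μ (neg_ne_zero.2 hℓ)

theorem addHaar_closedBall_eq_addHaar_ball_of_pos {x : E} {ρ : ℝ} (hρ : 0 < ρ) :
    μ (closedBall x ρ) = μ (ball x ρ) := by
  refine le_antisymm ?_ (measure_mono ball_subset_closedBall)
  calc μ (closedBall x ρ) ≤ μ (ball x ρ) + μ (sphere x ρ) := by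
        rw [← ball_union_sphere]; exact measure_union_le _ _
    _ = μ (ball x ρ) := by rw [Measure.addHaar_sphere_of_ne_zero μ x hρ.ne', add_zero]

theorem eq_of_tendsto_setAverage_abs_sub {f : E → ℝ} {x : E} {s : Set E} {T : ℝ}
    (hf : IntegrableAtFilter f (𝓝 x) μ)
    (hx : Tendsto (fun ρ => ⨍ y in closedBall x ρ, |f y - f x| ∂μ) (𝓝[>] 0) (𝓝 0))
    (hs : HasPositiveLowerDensityAt μ s x)
    (hT : Tendsto (fun ρ => ⨍ y in ball x ρ ∩ s, |T - f y| ∂μ) (𝓝[>] 0) (𝓝 0)) :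
    f x = T := by
  obtain ⟨κ, hκ, hdens⟩ := hs
  obtain ⟨U, hU, hfU⟩ := hf
  obtain ⟨ε, hε, hεU⟩ := Metric.mem_nhds_iff.1 hU
  have hbound : ∀ᶠ ρ in 𝓝[>] 0, |T - f x| ≤
      (⨍ y in ball x ρ ∩ s, |T - f y| ∂μ) + κ⁻¹ * ⨍ y in closedBall x ρ, |f y - f x| ∂μ := by
    filter_upwards [hdens, Ioo_mem_nhdsGT hε] with ρ hρ ⟨hρ₀, hρε⟩
    have hB : 0 < μ.real (closedBall x ρ) :=
      ENNReal.toReal_pos (measure_closedBall_pos μ x hρ₀).ne' measure_closedBall_lt_top.ne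
    have hfB : IntegrableOn f (closedBall x ρ) μ :=
      hfU.mono_set ((closedBall_subset_ball hρε).trans hεU)
    have hsB : ball x ρ ∩ s ⊆ closedBall x ρ := inter_subset_left.trans ball_subset_closedBall
    have hdens' : (κ : ℝ) * μ.real (closedBall x ρ) ≤ μ.real (ball x ρ ∩ s) := by
      rw [measureReal_def, addHaar_closedBall_eq_addHaar_ball_of_pos μ hρ₀, ← ENNReal.coe_toReal,
        ← ENNReal.toReal_mul]
      exact ENNReal.toReal_mono (measure_mono hsB |>.trans_lt measure_closedBall_lt_top).ne hρ
    have hs₀ : μ (ball x ρ ∩ s) ≠ 0 := by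
      intro h0
      rw [measureReal_def _ (ball x ρ ∩ s), h0, ENNReal.toReal_zero] at hdens'
      exact (mul_pos (by exact_mod_cast hκ) hB).not_ge hdens'
    calc |T - f x| ≤ (⨍ y in ball x ρ ∩ s, |T - f y| ∂μ) + ⨍ y in ball x ρ ∩ s, |f y - f x| ∂μ :=
          abs_sub_le_setAverage_add hs₀ (measure_mono hsB |>.trans_lt measure_closedBall_lt_top).ne
            (hfB.mono_set hsB) _ _
      _ ≤ _ := by
          gcongr
          exact setAverage_le_inv_mul_setAverage hsB hB (by exact_mod_cast hκ) hdens'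
            (hfB.sub (integrableOn_const measure_closedBall_lt_top.ne)).abs fun y => abs_nonneg _
  have hlim : Tendsto (fun ρ => (⨍ y in ball x ρ ∩ s, |T - f y| ∂μ) +
      κ⁻¹ * ⨍ y in closedBall x ρ, |f y - f x| ∂μ) (𝓝[>] 0) (𝓝 0) := by
    simpa using hT.add (hx.const_mul (κ⁻¹ : ℝ))
  have h0 : |T - f x| ≤ 0 := ge_of_tendsto hlim hbound
  exact (sub_eq_zero.1 (abs_nonpos_iff.1 h0)).symm

theorem lintegral_levelSetCoverSum (hE : 0 < finrank ℝ E) (φ : E → ℝ) (L : ℝ≥0) {t : Set E}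
    (ht : t.Countable) {ρ : E → ℝ} (hρ : ∀ x ∈ t, 0 ≤ ρ x) :
    ∫⁻ r, levelSetCoverSum φ L (finrank ℝ E - 1) t ρ r =
      ENNReal.ofReal (2 ^ finrank ℝ E * L) / μ (ball 0 1) *
        ∑' x : t, μ (closedBall (x : E) (ρ x)) := by
  have : Countable t := ht.to_subtype
  obtain ⟨m, hm⟩ : ∃ m, finrank ℝ E = m + 1 := Nat.exists_eq_succ_of_ne_zero hE.ne'
  simp only [levelSetCoverSum]
  rw [lintegral_tsum fun x => (measurable_const.indicator measurableSet_Icc).aemeasurable,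
    ← ENNReal.tsum_mul_left]
  refine tsum_congr fun x => ?_
  have hρx := hρ x x.2
  rw [lintegral_indicator_const measurableSet_Icc, Real.volume_Icc,
    Measure.addHaar_closedBall μ _ hρx, mul_comm (ENNReal.ofReal _) (μ (ball 0 1)), ← mul_assoc,
    ENNReal.div_mul_cancel (measure_ball_pos μ 0 one_pos).ne' measure_ball_lt_top.ne, hm,
    Nat.cast_add_one, add_sub_cancel_right, ENNReal.rpow_natCast,
    ← ENNReal.ofReal_pow (by positivity), ← ENNReal.ofReal_mul (by positivity),
    ← ENNReal.ofReal_mul (by positivity)]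
  congr 1
  ring

theorem ae_hausdorffMeasure_inter_preimage_singleton_eq_zero {S : Set E} (hS : μ S = 0)
    {φ : E → ℝ} {L : ℝ≥0} (hφ : LipschitzOnWith L φ S) :
    ∀ᵐ r : ℝ, μH[(finrank ℝ E : ℝ) - 1] (S ∩ φ ⁻¹' {r}) = 0 := by
  rcases (finrank ℝ E).eq_zero_or_pos with hE | hE
  · have : Subsingleton E := finrank_zero_iff.1 hE
    obtain rfl : S = ∅ := eq_empty_of_forall_notMem fun x hx => by
      rw [Subsingleton.eq_univ_of_nonempty ⟨x, hx⟩] at hS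
      exact (NeZero.ne (μ univ)) hS
    simp
  have hd : (0 : ℝ) ≤ finrank ℝ E - 1 := sub_nonneg.2 (by exact_mod_cast hE)
  choose t ρ htc htS hρ hcov hsum using fun k : ℕ =>
    exists_closedBall_covering_tsum_measure_le_of_null μ hS
      (ENNReal.inv_ne_zero.2 (ENNReal.natCast_ne_top k)) (Nat.one_div_pos_of_nat (n := k))
  set G : ℕ → ℝ → ℝ≥0∞ := fun k => levelSetCoverSum φ L (finrank ℝ E - 1) (t k) (ρ k)
  have : ∀ k, Countable (t k) := fun k => (htc k).to_subtype
  have hG : ∀ k, Measurable (G k) := fun k =>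
    Measurable.tsum fun _ => measurable_const.indicator measurableSet_Icc
  set C := ENNReal.ofReal (2 ^ finrank ℝ E * L) / μ (ball 0 1)
  have hC : Tendsto (fun k : ℕ => C * (k : ℝ≥0∞)⁻¹) atTop (𝓝 0) := by
    simpa using ENNReal.Tendsto.const_mul ENNReal.tendsto_inv_nat_nhds_zero
      (Or.inr (ENNReal.div_ne_top ENNReal.ofReal_ne_top (measure_ball_pos μ 0 one_pos).ne'))
  have hliminf : ∫⁻ r, liminf (fun k => G k r) atTop = 0 := by
    refine le_antisymm ?_ bot_le
    calc ∫⁻ r, liminf (fun k => G k r) atTop ≤ liminf (fun k => ∫⁻ r, G k r) atTop :=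
          lintegral_liminf_le hG
      _ ≤ liminf (fun k : ℕ => C * (k : ℝ≥0∞)⁻¹) atTop := by
          refine liminf_le_liminf (Eventually.of_forall fun k => ?_)
          rw [lintegral_levelSetCoverSum μ hE φ L (htc k) fun x hx => (hρ k x hx).1.le]
          gcongr; exact hsum k
      _ = 0 := hC.liminf_eq
  filter_upwards [(lintegral_eq_zero_iff (Measurable.liminf hG)).1 hliminf] with r hr
  refine le_antisymm ?_ bot_le
  exact (hausdorffMeasure_inter_preimage_singleton_le_liminf hφ hd
    tendsto_one_div_add_atTop_nhds_zero_nat t ρ htc htS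
    (fun k x hx => Ioo_subset_Icc_self (hρ k x hx)) hcov r).trans_eq hr

theorem LipschitzOnWith.ae_ae_frontier_inter_preimage_Iio_inter {A : Set E} (hA : IsOpen A)
    {φ : E → ℝ} {L : ℝ≥0} (hφ : LipschitzOnWith L φ A) {P : E → Prop}
    (hP : ∀ᵐ x ∂μ, x ∈ A → P x) :
    ∀ᵐ r : ℝ, ∀ᵐ x ∂(μH[(finrank ℝ E : ℝ) - 1] : Measure E).restrict
      (frontier (A ∩ φ ⁻¹' Iio r) ∩ A), P x := by
  have hS : μ {x ∈ A | ¬ P x} = 0 := by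
    refine measure_mono_null ?_ (ae_iff.1 hP)
    exact fun x hx h => hx.2 (h hx.1)
  filter_upwards [ae_hausdorffMeasure_inter_preimage_singleton_eq_zero μ hS
    (hφ.mono (sep_subset _ _))] with r hr
  have hΓ : MeasurableSet (frontier (A ∩ φ ⁻¹' Iio r) ∩ A) :=
    isClosed_frontier.measurableSet.inter hA.measurableSet
  refine (ae_restrict_iff' hΓ).2 (ae_iff.2 (measure_mono_null (fun x hx => ?_) hr))
  obtain ⟨hxΓ, hxP⟩ := Classical.not_imp.1 hx
  exact ⟨⟨hxΓ.2, hxP⟩, frontier_inter_preimage_Iio_inter_subset hA hφ.continuousOn r hxΓ⟩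

end HaarMeasure

theorem ae_eq_trace_on_level_sets {n : ℕ}
    (A : Set (Eucl n)) (hA : IsOpen A)
    (φ : Eucl n → ℝ) (L : ℝ≥0) (hφLip : LipschitzOnWith L φ A)
    (hφC1 : ContDiffOn ℝ 1 φ A) (hφgrad : ∀ x ∈ A, fderiv ℝ φ x ≠ 0)
    (f : Eucl n → ℝ) (hf : MemBV f A) :
    ∀ᵐ r : ℝ,
      ∀ Tp Tm : Eucl n → ℝ,
        IsTraceOn ((n : ℝ) - 1) (A ∩ φ ⁻¹' Iio r) f Tp
            (frontier (A ∩ φ ⁻¹' Iio r) ∩ A) →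
        IsTraceOn ((n : ℝ) - 1) (A \ closure (A ∩ φ ⁻¹' Iio r)) f Tm
            (frontier (A ∩ φ ⁻¹' Iio r) ∩ A) →
        ∀ᵐ x ∂((μH[(n : ℝ) - 1] : Measure (Eucl n)).restrict
            (frontier (A ∩ φ ⁻¹' Iio r) ∩ A)),
          f x = Tp x ∧ f x = Tm x := by
  have hφ : ContinuousOn φ A := hφLip.continuousOn
  have hlevel := hφLip.ae_ae_frontier_inter_preimage_Iio_inter volume hA
    (ae_tendsto_setAverage_abs_sub_of_integrableOn hA hf.1)
  rw [finrank_euclideanSpace_fin] at hlevel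
  filter_upwards [hlevel] with r hr Tp Tm hTp hTm
  have hΓ : MeasurableSet (frontier (A ∩ φ ⁻¹' Iio r) ∩ A) :=
    isClosed_frontier.measurableSet.inter hA.measurableSet
  filter_upwards [hTp, hTm, hr, ae_restrict_mem hΓ] with x hxp hxm hleb hxΓ
  have hAx : A ∈ 𝓝 x := hA.mem_nhds hxΓ.2
  obtain rfl : φ x = r := frontier_inter_preimage_Iio_inter_subset hA hφ r hxΓ
  have hfx : IntegrableAtFilter f (𝓝 x) volume := ⟨A, hAx, hf.1⟩
  have hφx : HasFDerivAt φ (fderiv ℝ φ x) x :=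
    ((hφC1.differentiableOn one_ne_zero).differentiableAt hAx).hasFDerivAt
  constructor
  · refine eq_of_tendsto_setAverage_abs_sub volume hfx hleb
      ((hφx.hasPositiveLowerDensityAt_preimage_Iio volume (hφgrad x hxΓ.2)).inter_of_mem_nhds
        hAx) ?_
    simpa only [setAverage_eq, smul_eq_mul, measureReal_def] using hxp
  · refine eq_of_tendsto_setAverage_abs_sub volume hfx hleb
      (((hφx.hasPositiveLowerDensityAt_preimage_Ioi volume (hφgrad x hxΓ.2)).inter_of_mem_nhds
        hAx).mono (inter_preimage_Ioi_subset_diff_closure hA hφ _)) ?_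
    simpa only [setAverage_eq, smul_eq_mul, measureReal_def] using hxm
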